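/- Let K be a field with char K ≠ 2, let (V, c) be a braided vector space over K such that c is of Hecke type of mark λ with λ ≠ 0, λ ≠ 1 and (3)!_λ ≠ 0, and let b be a c-bracket on (V, c). If the canonical K-linear map ι_{c,b} : V → U(V, c, b) into the enveloping algebra is injective, then b = 0. -/

import Mathlib

open TensorProduct

noncomputable section

variable {K : Type*} [Field K] {V : Type*} [AddCommGroup V] [Module K V]

/-- The endomorphism `c ⊗ id_V` of `V ⊗ (V ⊗ V)` (transported along associativity). -/
def opC1 (c : V ⊗[K] V →ₗ[K] V ⊗[K] V) :
    V ⊗[K] (V ⊗[K] V) →ₗ[K] V ⊗[K] (V ⊗[K] V) :=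
  (TensorProduct.assoc K V V V).toLinearMap ∘ₗ
    LinearMap.rTensor V c ∘ₗ (TensorProduct.assoc K V V V).symm.toLinearMap

/-- The endomorphism `id_V ⊗ c` of `V ⊗ (V ⊗ V)`. -/
def opC2 (c : V ⊗[K] V →ₗ[K] V ⊗[K] V) :
    V ⊗[K] (V ⊗[K] V) →ₗ[K] V ⊗[K] (V ⊗[K] V) :=
  LinearMap.lTensor V c

/-- The map `b ⊗ id_V : V ⊗ (V ⊗ V) → V ⊗ V`. -/
def opB1 (b : V ⊗[K] V →ₗ[K] V) :
    V ⊗[K] (V ⊗[K] V) →ₗ[K] V ⊗[K] V :=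
  LinearMap.rTensor V b ∘ₗ (TensorProduct.assoc K V V V).symm.toLinearMap

/-- The map `id_V ⊗ b : V ⊗ (V ⊗ V) → V ⊗ V`. -/
def opB2 (b : V ⊗[K] V →ₗ[K] V) :
    V ⊗[K] (V ⊗[K] V) →ₗ[K] V ⊗[K] V :=
  LinearMap.lTensor V b

/-- The braid equation `c₁ ∘ c₂ ∘ c₁ = c₂ ∘ c₁ ∘ c₂`. -/
def BraidEq (c : V ⊗[K] V →ₗ[K] V ⊗[K] V) : Prop :=
  opC1 c ∘ₗ opC2 c ∘ₗ opC1 c = opC2 c ∘ₗ opC1 c ∘ₗ opC2 c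

/-- `c` is of Hecke type of mark `lam`: `(c + id) ∘ (c - lam • id) = 0`. -/
def IsHecke (lam : K) (c : V ⊗[K] V →ₗ[K] V ⊗[K] V) : Prop :=
  (c + LinearMap.id) ∘ₗ (c - lam • LinearMap.id) = 0

/-- `b` is a `c`-bracket: `c ∘ b₁ = b₂ ∘ c₁ ∘ c₂` and `c ∘ b₂ = b₁ ∘ c₂ ∘ c₁`. -/
def IsBracket (c : V ⊗[K] V →ₗ[K] V ⊗[K] V) (b : V ⊗[K] V →ₗ[K] V) : Prop :=
  c ∘ₗ opB1 b = opB2 b ∘ₗ opC1 c ∘ₗ opC2 c ∧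
  c ∘ₗ opB2 b = opB1 b ∘ₗ opC2 c ∘ₗ opC1 c

/-- The linear map `V ⊗ V → T(V)`, `v ⊗ w ↦ ι v * ι w`. -/
def tensMul : V ⊗[K] V →ₗ[K] TensorAlgebra K V :=
  LinearMap.mul' K (TensorAlgebra K V) ∘ₗ
    TensorProduct.map (TensorAlgebra.ι K) (TensorAlgebra.ι K)

/-- The relation on `T(V)` whose associated ring quotient is
`U(V,c,b) = T(V)/(c(z) - lam•z - b(z) : z ∈ V ⊗ V)`. -/
def envRel (lam : K) (c : V ⊗[K] V →ₗ[K] V ⊗[K] V) (b : V ⊗[K] V →ₗ[K] V) :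
    TensorAlgebra K V → TensorAlgebra K V → Prop :=
  fun x y => ∃ z : V ⊗[K] V,
    x = tensMul (c z) ∧ y = lam • tensMul z + TensorAlgebra.ι K (b z)

/-- The canonical map `ι_{c,b} : V → U(V,c,b)`. -/
def envIota (lam : K) (c : V ⊗[K] V →ₗ[K] V ⊗[K] V) (b : V ⊗[K] V →ₗ[K] V) :
    V →ₗ[K] RingQuot (envRel lam c b) :=
  (RingQuot.mkAlgHom K (envRel lam c b)).toLinearMap ∘ₗ TensorAlgebra.ι K

/-- The q-integer `(n)_lam = 1 + lam + ⋯ + lam^(n-1)`. -/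
def qInt (lam : K) (n : ℕ) : K := ∑ i ∈ Finset.range n, lam ^ i

/-- The q-factorial `(n)!_lam = (1)_lam (2)_lam ⋯ (n)_lam`. -/
def qFac (lam : K) (n : ℕ) : K := ∏ i ∈ Finset.range n, qInt lam (i + 1)

/-! Injectivity of `ι_{c,b}` turns the defining relation of `U(V,c,b)` at `c z`, combined with
the Hecke relation `c² = (λ-1)c + λ`, into `b ∘ c = -b`. The bracket axioms express `c ∘ b₁` and
`c ∘ b₂` through `b₂ c₁ c₂` and `b₁ c₂ c₁`; expanding `c² ∘ b₁` and `c² ∘ b₂` with the braid and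
Hecke relations and cancelling `λ`, `λ - 1` and `(3)_λ` gives `b ⊗ id = -(id ⊗ b)`. Contracting
the first factor with a linear form `φ`, `φ w = 1`, shows `b (v ⊗ y) = α(v) y`, and then
`b (v ⊗ v) ⊗ w = -(v ⊗ b (v ⊗ w))` reads `2 α(v) v = 0`, so `b = 0` as `2 ≠ 0`. -/

structure HeckeBracketRelations {M N : Type*} [AddCommGroup M] [Module K M]
    [AddCommGroup N] [Module K N] (lam : K) (s t : Module.End K M) (c : Module.End K N)
    (B₁ B₂ : M →ₗ[K] N) : Prop where
  hecke_s : ∀ x, s (s x) = (lam - 1) • s x + lam • x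
  hecke_t : ∀ x, t (t x) = (lam - 1) • t x + lam • x
  hecke_c : ∀ y, c (c y) = (lam - 1) • c y + lam • y
  braid : ∀ x, s (t (s x)) = t (s (t x))
  apply_s_eq_neg : ∀ x, B₁ (s x) = -B₁ x
  apply_t_eq_neg : ∀ x, B₂ (t x) = -B₂ x
  c_apply₁ : ∀ x, c (B₁ x) = B₂ (s (t x))
  c_apply₂ : ∀ x, c (B₂ x) = B₁ (t (s x))

namespace HeckeBracketRelations

variable {M N : Type*} [AddCommGroup M] [Module K M] [AddCommGroup N] [Module K N]
  {lam : K} {s t : Module.End K M} {c : Module.End K N} {B₁ B₂ : M →ₗ[K] N}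

theorem symm (h : HeckeBracketRelations lam s t c B₁ B₂) :
    HeckeBracketRelations lam t s c B₂ B₁ where
  hecke_s := h.hecke_t
  hecke_t := h.hecke_s
  hecke_c := h.hecke_c
  braid x := (h.braid x).symm
  apply_s_eq_neg := h.apply_t_eq_neg
  apply_t_eq_neg := h.apply_s_eq_neg
  c_apply₁ := h.c_apply₂
  c_apply₂ := h.c_apply₁

theorem c_apply_add_c_apply (h : HeckeBracketRelations lam s t c B₁ B₂) (hlam1 : lam ≠ 1)
    (x : M) : c (B₁ x) + c (B₂ x) = lam • B₁ (t x) + lam • B₁ x := by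
  have hcc : c (c (B₁ x)) = -((lam - 1) • c (B₂ x)) + (lam * (lam - 1)) • B₁ (t x)
      + (lam * lam) • B₁ x := by
    rw [h.c_apply₁, h.c_apply₂, h.hecke_s, map_add, map_smul, map_smul, map_add, map_smul,
      map_smul, ← h.braid, h.apply_s_eq_neg, ← h.c_apply₂, h.hecke_t, map_add, map_smul, map_smul]
    module
  have key : (lam - 1) • (c (B₁ x) + c (B₂ x) - lam • B₁ (t x) - lam • B₁ x) = 0 := by
    linear_combination (norm := module) hcc - h.hecke_c (B₁ x)
  linear_combination (norm := module) (smul_eq_zero_iff_right (sub_ne_zero.mpr hlam1)).mp key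

theorem c_apply₂_eq_neg (h : HeckeBracketRelations lam s t c B₁ B₂) (hlam0 : lam ≠ 0)
    (hlam1 : lam ≠ 1) (x : M) : c (B₂ x) = -B₂ x := by
  have hsym : ∀ y, B₂ (s y) + B₂ y = B₁ (t y) + B₁ y := fun y ↦ by
    have key : lam • (B₂ (s y) + B₂ y - B₁ (t y) - B₁ y) = 0 := by
      linear_combination (norm := module)
        h.c_apply_add_c_apply hlam1 y - h.symm.c_apply_add_c_apply hlam1 y
    linear_combination (norm := module) (smul_eq_zero_iff_right hlam0).mp key
  have ht := hsym (t x)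
  rw [← h.c_apply₁, h.hecke_t, map_add, map_smul, map_smul, h.apply_t_eq_neg] at ht
  linear_combination (norm := module) h.c_apply_add_c_apply hlam1 x - ht

theorem apply_eq_neg (h : HeckeBracketRelations lam s t c B₁ B₂) (hlam0 : lam ≠ 0)
    (hlam1 : lam ≠ 1) (hlam3 : 1 + lam + lam ^ 2 ≠ 0) (x : M) : B₁ x = -B₂ x := by
  have hBt : ∀ y, lam • B₁ (t y) = -((lam + 1) • B₁ y) - B₂ y := fun y ↦ by
    linear_combination (norm := module) h.symm.c_apply₂_eq_neg hlam0 hlam1 y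
      + h.c_apply₂_eq_neg hlam0 hlam1 y - h.c_apply_add_c_apply hlam1 y
  have htt := hBt (t x)
  rw [h.hecke_t, map_add, map_smul, map_smul, h.apply_t_eq_neg] at htt
  have key : (1 + lam + lam ^ 2) • (B₁ x + B₂ x) = 0 := by
    linear_combination (norm := module) (lam ^ 2 + 1) • hBt x - lam • htt
  linear_combination (norm := module) (smul_eq_zero_iff_right hlam3).mp key

end HeckeBracketRelations

theorem IsHecke.mul_self {lam : K} {c : Module.End K (V ⊗[K] V)} (h : IsHecke lam c) :
    c * c = (lam - 1) • c + lam • 1 := by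
  have h' : c * c + c - lam • c - lam • 1 = 0 := by
    rw [← h]
    simp only [Module.End.mul_eq_comp, Module.End.one_eq_id, LinearMap.comp_sub,
      LinearMap.add_comp, LinearMap.comp_smul, LinearMap.id_comp, LinearMap.comp_id, smul_add]
    abel
  linear_combination (norm := module) h'

theorem map_mul_self_eq {A B : Type*} [Ring A] [Algebra K A] [Ring B] [Algebra K B] {lam : K}
    (φ : A →ₐ[K] B) {a : A} (h : a * a = (lam - 1) • a + lam • 1) :
    φ a * φ a = (lam - 1) • φ a + lam • 1 := by
  rw [← map_mul, h, map_add, map_smul, map_smul, map_one]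

theorem Module.End.apply_apply_of_mul_self_eq {lam : K} {W : Type*} [AddCommGroup W]
    [Module K W] {f : Module.End K W} (h : f * f = (lam - 1) • f + lam • 1) (x : W) :
    f (f x) = (lam - 1) • f x + lam • x :=
  LinearMap.congr_fun h x

theorem opC1_eq_conj_rTensor (c : Module.End K (V ⊗[K] V)) :
    opC1 c = ((TensorProduct.assoc K V V V).conjAlgEquiv K).toAlgHom.comp
      (Module.End.rTensorAlgHom K (V ⊗[K] V) V) c :=
  rfl

theorem opC2_eq_lTensor (c : Module.End K (V ⊗[K] V)) :
    opC2 c = Module.End.lTensorAlgHom K (V ⊗[K] V) V c :=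
  rfl

theorem opB1_opC1_apply (b : V ⊗[K] V →ₗ[K] V) (c : Module.End K (V ⊗[K] V))
    (x : V ⊗[K] (V ⊗[K] V)) : opB1 b (opC1 c x) = opB1 (b ∘ₗ c) x := by
  simp [opB1, opC1, LinearMap.rTensor_comp_apply]

theorem opB2_opC2_apply (b : V ⊗[K] V →ₗ[K] V) (c : Module.End K (V ⊗[K] V))
    (x : V ⊗[K] (V ⊗[K] V)) : opB2 b (opC2 c x) = opB2 (b ∘ₗ c) x := by
  simp [opB2, opC2, LinearMap.lTensor_comp_apply]

theorem heckeBracketRelations {lam : K} {c : Module.End K (V ⊗[K] V)} {b : V ⊗[K] V →ₗ[K] V}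
    (hbraid : BraidEq c) (hHecke : IsHecke lam c) (hb : IsBracket c b) (hbc : b ∘ₗ c = -b) :
    HeckeBracketRelations lam (opC1 c) (opC2 c) c (opB1 b) (opB2 b) where
  hecke_s := Module.End.apply_apply_of_mul_self_eq <| by
    rw [opC1_eq_conj_rTensor]; exact map_mul_self_eq _ hHecke.mul_self
  hecke_t := Module.End.apply_apply_of_mul_self_eq <| by
    rw [opC2_eq_lTensor]; exact map_mul_self_eq _ hHecke.mul_self
  hecke_c := Module.End.apply_apply_of_mul_self_eq hHecke.mul_self
  braid := LinearMap.congr_fun hbraid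
  apply_s_eq_neg x := by rw [opB1_opC1_apply, hbc]; simp [opB1]
  apply_t_eq_neg x := by rw [opB2_opC2_apply, hbc]; simp [opB2]
  c_apply₁ := LinearMap.congr_fun hb.1
  c_apply₂ := LinearMap.congr_fun hb.2

theorem mkAlgHom_tensMul_braiding (lam : K) (c : Module.End K (V ⊗[K] V))
    (b : V ⊗[K] V →ₗ[K] V) (z : V ⊗[K] V) :
    RingQuot.mkAlgHom K (envRel lam c b) (tensMul (c z)) =
      lam • RingQuot.mkAlgHom K (envRel lam c b) (tensMul z) + envIota lam c b (b z) := by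
  rw [RingQuot.mkAlgHom_rel K ⟨z, rfl, rfl⟩, map_add, map_smul]
  rfl

theorem comp_eq_neg_of_envIota_injective {lam : K} {c : Module.End K (V ⊗[K] V)}
    {b : V ⊗[K] V →ₗ[K] V} (hHecke : IsHecke lam c)
    (hinj : Function.Injective (envIota lam c b)) : b ∘ₗ c = -b := by
  refine LinearMap.ext fun z ↦ ?_
  have hcc := mkAlgHom_tensMul_braiding lam c b (c z)
  simp only [Module.End.apply_apply_of_mul_self_eq hHecke.mul_self, map_add, map_smul,
    mkAlgHom_tensMul_braiding] at hcc
  have hsum : envIota lam c b (b (c z) + b z) = envIota lam c b 0 := by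
    rw [map_add, map_zero]
    linear_combination (norm := module) -hcc
  simpa [add_eq_zero_iff_eq_neg] using hinj hsum

theorem eq_zero_of_opB1_eq_neg_opB2 (h2 : (2 : K) ≠ 0) {f : V ⊗[K] V →ₗ[K] V}
    (h : opB1 f = -opB2 f) : f = 0 := by
  have hf : ∀ u v w : V, f (u ⊗ₜ v) ⊗ₜ[K] w = -(u ⊗ₜ f (v ⊗ₜ w)) := fun u v w ↦ by
    simpa [opB1, opB2] using LinearMap.congr_fun h (u ⊗ₜ (v ⊗ₜ w))
  refine TensorProduct.ext' fun v w ↦ ?_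
  rcases eq_or_ne w 0 with rfl | hw
  · simp
  obtain ⟨φ, hφ⟩ : ∃ φ : Module.Dual K V, φ w = 1 := by
    obtain ⟨φ, hφ⟩ : ∃ φ : Module.Dual K V, φ w ≠ 0 := by
      by_contra! h
      exact hw ((Module.forall_dual_apply_eq_zero_iff K w).mp h)
    exact ⟨(φ w)⁻¹ • φ, by simp [hφ]⟩
  have hcoef : ∀ x y, f (x ⊗ₜ y) = -φ (f (w ⊗ₜ x)) • y := fun x y ↦ by
    have := congrArg (TensorProduct.lid K V ∘ φ.rTensor V) (hf w x y)
    simp only [Function.comp_apply, LinearMap.rTensor_tmul, TensorProduct.lid_tmul, hφ,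
      one_smul, map_neg] at this
    rw [neg_smul, this, neg_neg]
  have hvw := congrArg (TensorProduct.rid K V ∘ φ.lTensor V) (hf v v w)
  simp only [Function.comp_apply, hcoef v, TensorProduct.tmul_smul, map_neg, map_smul,
    LinearMap.lTensor_tmul, TensorProduct.rid_tmul, hφ, one_smul] at hvw
  have htwice : (2 * -φ (f (w ⊗ₜ v))) • v = 0 := by
    linear_combination (norm := module) hvw
  rcases smul_eq_zero.mp htwice with hα | rfl
  · rw [hcoef, (mul_eq_zero.mp hα).resolve_left h2, zero_smul, LinearMap.zero_apply]
  · simp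

theorem qFac_three (lam : K) : qFac lam 3 = (1 + lam) * (1 + lam + lam ^ 2) := by
  simp only [qFac, qInt, Finset.prod_range_succ, Finset.sum_range_succ]
  ring

theorem bracket_eq_zero_of_envIota_injective
    (hchar : ringChar K ≠ 2) (lam : K) (hlam0 : lam ≠ 0) (hlam1 : lam ≠ 1)
    (hfac : qFac lam 3 ≠ 0)
    (c : V ⊗[K] V →ₗ[K] V ⊗[K] V) (hbraid : BraidEq c) (hHecke : IsHecke lam c)
    (b : V ⊗[K] V →ₗ[K] V) (hb : IsBracket c b)
    (hinj : Function.Injective (envIota lam c b)) :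
    b = 0 := by
  have hlam3 : 1 + lam + lam ^ 2 ≠ 0 := right_ne_zero_of_mul (qFac_three lam ▸ hfac)
  have hrel := heckeBracketRelations hbraid hHecke hb
    (comp_eq_neg_of_envIota_injective hHecke hinj)
  refine eq_zero_of_opB1_eq_neg_opB2 (Ring.two_ne_zero hchar) (LinearMap.ext fun x ↦ ?_)
  exact hrel.apply_eq_neg hlam0 hlam1 hlam3 x

end
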